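/- Let m ≥ 0, set N = 2m+1, let z_1,…,z_N be complex numbers such that e^{iz_1},…,e^{iz_N} are pairwise distinct, and let D be the N×N complex matrix with D_{jj} = (1/2) Σ_{k≠j} cot((z_j − z_k)/2) and, for i ≠ j, D_{ij} = (1/2) csc((z_i − z_j)/2) · ∏_{k≠i} sin((z_i − z_k)/2) / ∏_{k≠j} sin((z_j − z_k)/2). If f is a trigonometric polynomial of degree at most m, then for every i, f'(z_i) = Σ_{j=1}^N D_{ij} f(z_j). -/

import Mathlib

/-!
Put `w k = exp (I * z k)`. The half-angle formulas express the entries of `D` through the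
derivatives `ℓⱼ'(wᵢ)` of the Lagrange basis polynomials of the nodes `w`:
`D i j = I wᵢ (wⱼ / wᵢ)^m ℓⱼ'(wᵢ) - I m δᵢⱼ`. Lagrange differentiation is exact on polynomials
of degree `≤ 2m`, so applying `D` to `exp (I n z) = w^(n+m) / w^m` with `|n| ≤ m` gives
`I n exp (I n zᵢ)`, its derivative at `zᵢ`. Exactness survives linear combinations, and
`cos (k z)`, `sin (k z)` with `k ≤ m` are combinations of two such exponentials.
-/

open Finset Polynomial Complex

namespace Lagrange

variable {F ι : Type*} [Field F] [DecidableEq ι] {s : Finset ι} {v : ι → F}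

theorem eval_derivative_eq_sum (hvs : Set.InjOn v s) {p : F[X]} (hp : p.degree < #s) (x : F) :
    (derivative p).eval x = ∑ j ∈ s, p.eval (v j) * (derivative (Lagrange.basis s v j)).eval x := by
  nth_rewrite 1 [eq_interpolate hvs hp]
  simp [interpolate_apply, eval_finsetSum]

theorem derivative_basisDivisor (x y : F) : derivative (basisDivisor x y) = C (x - y)⁻¹ := by
  simp [basisDivisor]

theorem eval_derivative_basis_self (hvs : Set.InjOn v s) {i : ι} (hi : i ∈ s) :
    (derivative (Lagrange.basis s v i)).eval (v i) = ∑ k ∈ s.erase i, (v i - v k)⁻¹ := by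
  rw [Lagrange.basis, derivative_prod_finset, eval_finsetSum]
  refine sum_congr rfl fun k _ => ?_
  have hne : ∀ l ∈ s.erase i, v i ≠ v l := fun l hl =>
    hvs.ne hi (mem_of_mem_erase hl) (ne_of_mem_erase hl).symm
  rw [eval_mul, eval_prod, prod_eq_one fun l hl => eval_basisDivisor_left_of_ne
    (hne l (mem_of_mem_erase hl)), one_mul, derivative_basisDivisor, eval_C]

theorem eval_derivative_basis_of_ne {i j : ι} (hi : i ∈ s.erase j) :
    (derivative (Lagrange.basis s v j)).eval (v i) =
      (∏ k ∈ (s.erase j).erase i, (v i - v k)) / ∏ k ∈ s.erase j, (v j - v k) := by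
  rw [Lagrange.basis, ← mul_prod_erase _ _ hi, derivative_mul, eval_add, eval_mul, eval_mul,
    eval_basisDivisor_right, zero_mul, add_zero, derivative_basisDivisor, eval_C, eval_prod]
  simp only [basisDivisor, eval_mul, eval_C, eval_sub, eval_X]
  rw [← mul_prod_erase _ (fun k => v j - v k) hi, div_eq_mul_inv, mul_inv, ← prod_inv_distrib,
    prod_mul_distrib]
  ring

variable [Fintype ι]

noncomputable def diffMatrix (v : ι → F) : Matrix ι ι F :=
  Matrix.of fun i j => (derivative (Lagrange.basis univ v j)).eval (v i)

theorem sum_diffMatrix_mul_pow (hv : Function.Injective v) (i : ι) {n : ℕ}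
    (hn : n < Fintype.card ι) :
    ∑ j, diffMatrix v i j * v j ^ n = n * v i ^ (n - 1) := by
  have hdeg : ((X : F[X]) ^ n).degree < #(univ : Finset ι) := by
    rw [degree_X_pow, card_univ]; exact_mod_cast hn
  have hexact := eval_derivative_eq_sum hv.injOn hdeg (v i)
  simp only [derivative_X_pow, eval_mul, eval_C, eval_pow, eval_X] at hexact
  simp only [diffMatrix, Matrix.of_apply, mul_comm, hexact]

end Lagrange

namespace Complex

theorem exp_I_mul_eq_sq (x : ℂ) : cexp (I * x) = cexp (I * x / 2) ^ 2 := by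
  rw [← exp_nat_mul]; ring_nf

theorem exp_sub_div_two_mul_I (x y : ℂ) :
    cexp ((x - y) / 2 * I) = cexp (I * x / 2) / cexp (I * y / 2) := by
  rw [← exp_sub]; ring_nf

theorem sin_sub_div_two_eq (x y : ℂ) :
    sin ((x - y) / 2) =
      (cexp (I * x) - cexp (I * y)) / (2 * I * cexp (I * x / 2) * cexp (I * y / 2)) := by
  rw [Complex.sin, ← neg_div, neg_sub, exp_sub_div_two_mul_I, exp_sub_div_two_mul_I,
    exp_I_mul_eq_sq x, exp_I_mul_eq_sq y]
  field_simp
  ring_nf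
  rw [I_sq]
  ring

theorem cos_sub_div_two_eq (x y : ℂ) :
    cos ((x - y) / 2) =
      (cexp (I * x) + cexp (I * y)) / (2 * cexp (I * x / 2) * cexp (I * y / 2)) := by
  rw [Complex.cos, ← neg_div, neg_sub, exp_sub_div_two_mul_I, exp_sub_div_two_mul_I,
    exp_I_mul_eq_sq x, exp_I_mul_eq_sq y]
  field_simp

theorem cos_div_sin_sub_div_two (x y : ℂ) :
    cos ((x - y) / 2) / sin ((x - y) / 2) =
      I * (cexp (I * x) + cexp (I * y)) / (cexp (I * x) - cexp (I * y)) := by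
  rw [cos_sub_div_two_eq, sin_sub_div_two_eq]
  rcases eq_or_ne (cexp (I * x) - cexp (I * y)) 0 with h | h
  · simp [h]
  · field_simp

theorem prod_sin_sub_div_two {ι : Type*} (s : Finset ι) (x : ℂ) (z : ι → ℂ) :
    ∏ k ∈ s, sin ((x - z k) / 2) = (∏ k ∈ s, (cexp (I * x) - cexp (I * z k))) /
      ((2 * I * cexp (I * x / 2)) ^ #s * ∏ k ∈ s, cexp (I * z k / 2)) := by
  simp_rw [sin_sub_div_two_eq, prod_div_distrib, prod_mul_distrib, prod_const, mul_pow]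

end Complex

section DiffMatrixExactAt

variable {𝕜 ι α : Type*} [NontriviallyNormedField 𝕜] [Fintype ι]
  {D : Matrix ι ι 𝕜} {z : ι → 𝕜} {i : ι} {f g : 𝕜 → 𝕜}

def DiffMatrixExactAt (D : Matrix ι ι 𝕜) (z : ι → 𝕜) (i : ι) (f : 𝕜 → 𝕜) : Prop :=
  HasDerivAt f (∑ j, D i j * f (z j)) (z i)

namespace DiffMatrixExactAt

theorem add (hf : DiffMatrixExactAt D z i f) (hg : DiffMatrixExactAt D z i g) :
    DiffMatrixExactAt D z i fun x => f x + g x := by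
  unfold DiffMatrixExactAt at *
  simp only [mul_add, sum_add_distrib]
  exact hf.fun_add hg

theorem const_mul (c : 𝕜) (hf : DiffMatrixExactAt D z i f) :
    DiffMatrixExactAt D z i fun x => c * f x := by
  unfold DiffMatrixExactAt at *
  simpa only [mul_left_comm _ c, ← mul_sum] using hf.const_mul c

theorem sum {s : Finset α} {f : α → 𝕜 → 𝕜} (h : ∀ k ∈ s, DiffMatrixExactAt D z i (f k)) :
    DiffMatrixExactAt D z i fun x => ∑ k ∈ s, f k x := by
  unfold DiffMatrixExactAt at *
  simpa only [mul_sum, sum_comm (s := s)] using HasDerivAt.fun_sum h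

theorem deriv_eq (hf : DiffMatrixExactAt D z i f) : deriv f (z i) = ∑ j, D i j * f (z j) :=
  HasDerivAt.deriv hf

end DiffMatrixExactAt

end DiffMatrixExactAt

section TrigDiffMatrix

variable {ι : Type*} [Fintype ι] [DecidableEq ι]

noncomputable def trigDiffMatrix (z : ι → ℂ) : Matrix ι ι ℂ :=
  Matrix.of fun i j =>
    if i = j then
      (1 / 2) * ∑ k ∈ univ.erase i, (cos ((z i - z k) / 2) / sin ((z i - z k) / 2))
    else
      (1 / 2) * (1 / sin ((z i - z j) / 2)) *
        ((∏ k ∈ univ.erase i, sin ((z i - z k) / 2)) /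
          (∏ k ∈ univ.erase j, sin ((z j - z k) / 2)))

variable {m : ℕ} {z : ι → ℂ}
  (hz : Function.Injective fun k => cexp (I * z k)) (hcard : Fintype.card ι = 2 * m + 1)
include hz hcard

theorem trigDiffMatrix_apply_self (i : ι) :
    trigDiffMatrix z i i =
      I * cexp (I * z i) * Lagrange.diffMatrix (fun k => cexp (I * z k)) i i - I * m := by
  have hcot : ∀ k ∈ univ.erase i,
      (1 / 2 : ℂ) * (cos ((z i - z k) / 2) / sin ((z i - z k) / 2)) =
        I * cexp (I * z i) * (cexp (I * z i) - cexp (I * z k))⁻¹ - I / 2 := by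
    intro k hk
    have hne : cexp (I * z i) - cexp (I * z k) ≠ 0 :=
      sub_ne_zero.mpr (hz.ne (ne_of_mem_erase hk).symm)
    rw [cos_div_sin_sub_div_two]
    field_simp
    ring
  rw [trigDiffMatrix, Matrix.of_apply, if_pos rfl, mul_sum, sum_congr rfl hcot, sum_sub_distrib,
    sum_const, card_erase_of_mem (mem_univ i), card_univ, hcard, Lagrange.diffMatrix,
    Matrix.of_apply, Lagrange.eval_derivative_basis_self hz.injOn (mem_univ i), mul_sum]
  push_cast
  ring

theorem trigDiffMatrix_apply_of_ne {i j : ι} (hij : i ≠ j) :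
    trigDiffMatrix z i j = I * cexp (I * z i) * (cexp (I * z j) / cexp (I * z i)) ^ m *
      Lagrange.diffMatrix (fun k => cexp (I * z k)) i j := by
  have hcard_erase : ∀ l : ι, #(univ.erase l) = 2 * m := fun l => by
    rw [card_erase_of_mem (mem_univ l), card_univ, hcard]; rfl
  have hi : i ∈ univ.erase j := mem_erase.mpr ⟨hij, mem_univ i⟩
  rw [trigDiffMatrix, Matrix.of_apply, if_neg hij, prod_sin_sub_div_two, prod_sin_sub_div_two,
    sin_sub_div_two_eq, hcard_erase, hcard_erase, Lagrange.diffMatrix, Matrix.of_apply,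
    Lagrange.eval_derivative_basis_of_ne (v := fun k => cexp (I * z k)) hi,
    ← mul_prod_erase _ _ (mem_erase.mpr ⟨hij.symm, mem_univ j⟩), erase_right_comm]
  have hU : ∏ k, cexp (I * z k / 2) ≠ 0 := prod_ne_zero_iff.mpr fun k _ => exp_ne_zero _
  have hR : ∀ l, ∏ k ∈ univ.erase l, cexp (I * z k / 2) =
      (∏ k, cexp (I * z k / 2)) / cexp (I * z l / 2) := fun l => by
    rw [eq_div_iff (exp_ne_zero _), prod_erase_mul _ _ (mem_univ l)]
  have hne : cexp (I * z i) - cexp (I * z j) ≠ 0 := sub_ne_zero.mpr (hz.ne hij)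
  have hQ : ∏ k ∈ univ.erase j, (cexp (I * z j) - cexp (I * z k)) ≠ 0 :=
    prod_ne_zero_iff.mpr fun k hk => sub_ne_zero.mpr (hz.ne (ne_of_mem_erase hk).symm)
  have hui := exp_ne_zero (I * z i / 2)
  rw [hR, hR]
  generalize ∏ k ∈ (univ.erase j).erase i, (cexp (I * z i) - cexp (I * z k)) = P at *
  generalize ∏ k ∈ univ.erase j, (cexp (I * z j) - cexp (I * z k)) = Q at *
  generalize ∏ k, cexp (I * z k / 2) = U at *
  rw [exp_I_mul_eq_sq (z i), exp_I_mul_eq_sq (z j)] at *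
  field_simp
  rw [div_pow, ← pow_mul, ← pow_mul]
  field_simp
  ring

theorem trigDiffMatrix_apply (i j : ι) :
    trigDiffMatrix z i j = I * cexp (I * z i) * (cexp (I * z j) / cexp (I * z i)) ^ m *
      Lagrange.diffMatrix (fun k => cexp (I * z k)) i j - if i = j then I * m else 0 := by
  rcases eq_or_ne i j with rfl | hij
  · rw [trigDiffMatrix_apply_self hz hcard, if_pos rfl, div_self (exp_ne_zero _), one_pow,
      mul_one]
  · rw [trigDiffMatrix_apply_of_ne hz hcard hij, if_neg hij, sub_zero]

theorem sum_trigDiffMatrix_mul_exp (i : ι) {n : ℤ} (hn : |n| ≤ m) :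
    ∑ j, trigDiffMatrix z i j * cexp (I * n * z j) = I * n * cexp (I * n * z i) := by
  obtain ⟨N, hN⟩ : ∃ N : ℕ, (N : ℤ) = n + m :=
    ⟨(n + m).toNat, Int.toNat_of_nonneg (by linarith [neg_abs_le n])⟩
  have hN_lt : N < Fintype.card ι := by rw [hcard]; linarith [le_abs_self n]
  have hNc : (N : ℂ) = n + m := by exact_mod_cast hN
  have hpow : ∀ x : ℂ, cexp (I * n * x) = cexp (I * x) ^ N / cexp (I * x) ^ m := fun x => by
    rw [← exp_nat_mul, ← exp_nat_mul, ← exp_sub, hNc]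
    ring_nf
  set w : ι → ℂ := fun k => cexp (I * z k)
  simp only [hpow]
  calc ∑ j, trigDiffMatrix z i j * (w j ^ N / w j ^ m)
      = ∑ j, (I * w i / w i ^ m * (Lagrange.diffMatrix w i j * w j ^ N) -
          if i = j then I * m * (w i ^ N / w i ^ m) else 0) := by
        refine sum_congr rfl fun j _ => ?_
        rw [trigDiffMatrix_apply hz hcard]
        simp only [w, div_pow]
        split_ifs with h
        · subst h; field_simp
        · field_simp; ring
    _ = I * w i / w i ^ m * (N * w i ^ (N - 1)) - I * m * (w i ^ N / w i ^ m) := by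
        rw [sum_sub_distrib, ← mul_sum, Lagrange.sum_diffMatrix_mul_pow hz i hN_lt, sum_ite_eq,
          if_pos (mem_univ i)]
    _ = I * n * (w i ^ N / w i ^ m) := by
        have hderiv_pow : (N : ℂ) * w i ^ (N - 1) * w i = N * w i ^ N := by
          rcases N with _ | N
          · simp
          · rw [Nat.add_sub_cancel, pow_succ]; ring
        have : w i ≠ 0 := exp_ne_zero _
        field_simp
        linear_combination hderiv_pow + w i ^ N * hNc

variable (i : ι)

theorem diffMatrixExactAt_trigDiffMatrix_exp {n : ℤ} (hn : |n| ≤ m) :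
    DiffMatrixExactAt (trigDiffMatrix z) z i fun x => cexp (I * n * x) := by
  have hexp := ((hasDerivAt_id (z i)).const_mul (I * n)).cexp
  simp only [id, mul_one] at hexp
  unfold DiffMatrixExactAt
  rw [sum_trigDiffMatrix_mul_exp hz hcard i hn]
  exact hexp.congr_deriv (mul_comm _ _)

theorem diffMatrixExactAt_trigDiffMatrix_const (c : ℂ) :
    DiffMatrixExactAt (trigDiffMatrix z) z i fun _ => c := by
  convert (diffMatrixExactAt_trigDiffMatrix_exp hz hcard i (n := 0) (by simp)).const_mul c
    using 2
  simp

theorem diffMatrixExactAt_trigDiffMatrix_cos {k : ℕ} (hk : k ≤ m) :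
    DiffMatrixExactAt (trigDiffMatrix z) z i fun x => cos (k * x) := by
  have hk' : |(k : ℤ)| ≤ m := by rw [Nat.abs_cast]; exact_mod_cast hk
  convert ((diffMatrixExactAt_trigDiffMatrix_exp hz hcard i hk').add
    (diffMatrixExactAt_trigDiffMatrix_exp hz hcard i (n := -k) (by rwa [abs_neg]))).const_mul
    (1 / 2) using 2 with x
  rw [Complex.cos]
  push_cast
  ring_nf

theorem diffMatrixExactAt_trigDiffMatrix_sin {k : ℕ} (hk : k ≤ m) :
    DiffMatrixExactAt (trigDiffMatrix z) z i fun x => sin (k * x) := by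
  have hk' : |(k : ℤ)| ≤ m := by rw [Nat.abs_cast]; exact_mod_cast hk
  convert ((diffMatrixExactAt_trigDiffMatrix_exp hz hcard i (n := -k) (by rwa [abs_neg])).add
    ((diffMatrixExactAt_trigDiffMatrix_exp hz hcard i hk').const_mul (-1))).const_mul
    (I / 2) using 2 with x
  rw [Complex.sin]
  push_cast
  ring_nf

end TrigDiffMatrix

/-- The trigonometric differentiation matrix (with `cot x = cos x / sin x` and
`csc x = 1 / sin x`) is exact on trigonometric polynomials of degree at most `m`,
using `N = 2m+1` nodes whose exponentials are pairwise distinct: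
`f'(z i) = Σ_j D i j * f (z j)`. -/
theorem trigonometric_differentiation_matrix (m : ℕ) (zs : Fin (2 * m + 1) → ℂ)
    (hz : Function.Injective fun k => Complex.exp (Complex.I * zs k))
    (D : Matrix (Fin (2 * m + 1)) (Fin (2 * m + 1)) ℂ)
    (hD : ∀ i j, D i j =
      if i = j then
        (1 / 2) * ∑ k ∈ Finset.univ.erase i,
          (Complex.cos ((zs i - zs k) / 2) / Complex.sin ((zs i - zs k) / 2))
      else
        (1 / 2) * (1 / Complex.sin ((zs i - zs j) / 2)) *
          ((∏ k ∈ Finset.univ.erase i, Complex.sin ((zs i - zs k) / 2)) /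
            (∏ k ∈ Finset.univ.erase j, Complex.sin ((zs j - zs k) / 2))))
    (a b : ℕ → ℂ) (i : Fin (2 * m + 1)) :
    deriv (fun z : ℂ => a 0 + ∑ k ∈ Finset.Icc 1 m,
        (a k * Complex.cos (k * z) + b k * Complex.sin (k * z))) (zs i) =
      ∑ j, D i j * (a 0 + ∑ k ∈ Finset.Icc 1 m,
        (a k * Complex.cos (k * zs j) + b k * Complex.sin (k * zs j))) := by
  obtain rfl : D = trigDiffMatrix zs := Matrix.ext hD
  have hcard : Fintype.card (Fin (2 * m + 1)) = 2 * m + 1 := Fintype.card_fin _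
  refine DiffMatrixExactAt.deriv_eq ?_
  refine (diffMatrixExactAt_trigDiffMatrix_const hz hcard i _).add (.sum fun k hk => ?_)
  have hkm : k ≤ m := (mem_Icc.mp hk).2
  exact ((diffMatrixExactAt_trigDiffMatrix_cos hz hcard i hkm).const_mul _).add
    ((diffMatrixExactAt_trigDiffMatrix_sin hz hcard i hkm).const_mul _)
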